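/- arXiv:0803.3474 — 6 statements merged into one kernel-verified Lean document; each statement's English description precedes it below -/
import Mathlib

section
/- Let J ⊆ ℝ be an open interval, let c₂ be C² on J, c₁ be C¹ on J, c₀ continuous on J, and let P be a C³ nonvanishing function on J; set Q = 1/P. Define transformed coefficients c̃₂ = c₂ + 3Q'/Q, c̃₁ = c₁ + 2c₂Q'/Q + 3Q''/Q, and c̃₀ = c₀ + c₂Q''/Q + c₁Q'/Q + Q'''/Q on J. Then (i) a C³ function y satisfies y''' + c₂y'' + c₁y' + c₀y = 0 on J if and only if z = P·y satisfies z''' + c̃₂z'' + c̃₁z' + c̃₀z = 0 on J; and (ii) if P is C⁵, then the semi-invariants computed from the transformed coefficients coincide with the original ones: c̃₂' + c̃₂²/3 - c̃₁ = c₂' + c₂²/3 - c₁ and c̃₂''/3 - 2c̃₂³/27 + c̃₁c̃₂/3 - c̃₀ = c₂''/3 - 2c₂³/27 + c₁c₂/3 - c₀ on J. (That is, I₁ and I₀ are invariant under the transformation y → P·y.) -/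
/-!
Write `Q = 1 / P` and `z = P y`, so that `y = Q z`. The Leibniz rule gives `L (Q z) = Q · L̃ z`,
where `L = ∂³ + c₂ ∂² + c₁ ∂ + c₀` and `L̃` is the operator with the coefficients `c̃ᵢ`; as `Q ≠ 0`,
`L y = 0` iff `L̃ z = 0`. For the semi-invariants put `r = Q'/Q`, so that `Q''/Q = r' + r²` and
`Q'''/Q = r'' + 3 r r' + r³`. Then `c̃₂ = c₂ + 3 r`, and `c̃₁`, `c̃₀` are polynomials in
`c₂, c₁, c₀, r, r', r''`, after which both invariance statements are polynomial identities.
-/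

open Set

variable {𝕜 : Type*} [NontriviallyNormedField 𝕜] {f g Q z r c₂ c₁ c₀ d₂ d₁ d₀ : 𝕜 → 𝕜}
  {s : Set 𝕜} {x : 𝕜}

theorem ContDiffOn.hasDerivAt_deriv {n : WithTop ℕ∞} (hf : ContDiffOn 𝕜 n f s) (hs : IsOpen s)
    (hn : n ≠ 0) (hx : x ∈ s) : HasDerivAt f (deriv f x) x :=
  ((hf.differentiableOn hn).differentiableAt (hs.mem_nhds hx)).hasDerivAt

theorem iteratedDeriv_eq_add_const_mul_of_eqOn {k : 𝕜 → 𝕜} {n : ℕ} (hs : IsOpen s) (hx : x ∈ s)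
    (hf : ContDiffOn 𝕜 n f s) (hg : ContDiffOn 𝕜 n g s) (a : 𝕜)
    (hk : EqOn k (fun u => f u + a * g u) s) :
    iteratedDeriv n k x = iteratedDeriv n f x + a * iteratedDeriv n g x := by
  rw [((hk.eventuallyEq_of_mem (hs.mem_nhds hx)).iteratedDeriv n).eq_of_nhds,
    iteratedDeriv_fun_add (hf.contDiffAt (hs.mem_nhds hx))
      (contDiffAt_const.mul (hg.contDiffAt (hs.mem_nhds hx))),
    iteratedDeriv_const_mul_field]

theorem deriv_deriv_fun_mul (hf : ContDiffAt 𝕜 2 f x) (hg : ContDiffAt 𝕜 2 g x) :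
    deriv (deriv fun u => f u * g u) x
      = deriv (deriv f) x * g x + 2 * deriv f x * deriv g x + f x * deriv (deriv g) x := by
  have h := iteratedDeriv_fun_mul hf hg
  simp only [iteratedDeriv_succ, iteratedDeriv_zero, Nat.reduceAdd, Finset.sum_range_succ,
    Finset.range_one, Finset.sum_singleton, Nat.choose_zero_right, Nat.cast_one, one_mul, tsub_zero,
    Nat.choose_succ_self_right, Nat.cast_ofNat, Nat.add_one_sub_one, Nat.choose_self, tsub_self] at h
  rw [h]
  ring

theorem deriv_deriv_deriv_fun_mul (hf : ContDiffAt 𝕜 3 f x) (hg : ContDiffAt 𝕜 3 g x) :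
    deriv (deriv (deriv fun u => f u * g u)) x
      = deriv (deriv (deriv f)) x * g x + 3 * deriv (deriv f) x * deriv g x
        + 3 * deriv f x * deriv (deriv g) x + f x * deriv (deriv (deriv g)) x := by
  have h := iteratedDeriv_fun_mul hf hg
  simp only [iteratedDeriv_succ, iteratedDeriv_zero, Nat.reduceAdd, Finset.sum_range_succ,
    Finset.range_one, Finset.sum_singleton, Nat.choose_zero_right, Nat.cast_one, one_mul, tsub_zero,
    Nat.choose_one_right, Nat.cast_ofNat, Nat.add_one_sub_one, Nat.choose_succ_self_right,
    Nat.reduceSub, Nat.choose_self, tsub_self] at h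
  rw [h]
  ring

theorem ContDiffOn.logDeriv {m n : WithTop ℕ∞} (hQ : ContDiffOn 𝕜 n Q s) (hs : IsOpen s)
    (hQ0 : ∀ u ∈ s, Q u ≠ 0) (hmn : m + 1 ≤ n) : ContDiffOn 𝕜 m (logDeriv Q) s :=
  (hQ.deriv_of_isOpen hs hmn).div (hQ.of_le (le_self_add.trans hmn)) hQ0

theorem deriv_deriv_div_self (hs : IsOpen s) (hQ : ContDiffOn 𝕜 2 Q s) (hQ0 : ∀ u ∈ s, Q u ≠ 0)
    (hx : x ∈ s) :
    deriv (deriv Q) x / Q x = deriv (logDeriv Q) x + logDeriv Q x ^ 2 := by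
  have hQx := hQ0 x hx
  have hr := ((hQ.deriv_of_isOpen hs (m := 1) (by norm_num)).hasDerivAt_deriv hs one_ne_zero
    hx).div (hQ.hasDerivAt_deriv hs two_ne_zero hx) hQx
  rw [logDeriv, hr.deriv, Pi.div_apply]
  field_simp
  ring

theorem deriv_deriv_deriv_div_self (hs : IsOpen s) (hQ : ContDiffOn 𝕜 3 Q s)
    (hQ0 : ∀ u ∈ s, Q u ≠ 0) (hx : x ∈ s) :
    deriv (deriv (deriv Q)) x / Q x = deriv (deriv (logDeriv Q)) x
      + 3 * logDeriv Q x * deriv (logDeriv Q) x + logDeriv Q x ^ 3 := by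
  have hr : ContDiffOn 𝕜 2 (logDeriv Q) s := hQ.logDeriv hs hQ0 (by norm_num)
  have hr' : ContDiffOn 𝕜 1 (deriv (logDeriv Q)) s := hr.deriv_of_isOpen hs (by norm_num)
  have hQ'' : EqOn (deriv (deriv Q))
      (fun u => Q u * (deriv (logDeriv Q) u + logDeriv Q u ^ 2)) s := fun u hu => by
    beta_reduce
    rw [← deriv_deriv_div_self hs (hQ.of_le (by norm_num)) hQ0 hu, mul_div_cancel₀ _ (hQ0 u hu)]
  have hQ''' := (hQ.hasDerivAt_deriv hs (by norm_num) hx).fun_mul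
    ((hr'.hasDerivAt_deriv hs (by norm_num) hx).fun_add
      ((hr.hasDerivAt_deriv hs (by norm_num) hx).fun_pow 2))
  have hQx := hQ0 x hx
  rw [hQ''.deriv hs hx, hQ'''.deriv, logDeriv_apply, Nat.cast_ofNat, pow_one]
  field_simp
  ring

noncomputable def thirdOrderOp (c₂ c₁ c₀ y : 𝕜 → 𝕜) (x : 𝕜) : 𝕜 :=
  deriv (deriv (deriv y)) x + c₂ x * deriv (deriv y) x + c₁ x * deriv y x + c₀ x * y x

theorem thirdOrderOp_congr (hs : IsOpen s) (h : EqOn f g s) :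
    EqOn (thirdOrderOp c₂ c₁ c₀ f) (thirdOrderOp c₂ c₁ c₀ g) s := fun x hx => by
  have h₁ := h.deriv hs
  have h₂ := h₁.deriv hs
  simp only [thirdOrderOp, h hx, h₁ hx, h₂ hx, h₂.deriv hs hx]

theorem thirdOrderOp_fun_mul (hQ : ContDiffAt 𝕜 3 Q x) (hz : ContDiffAt 𝕜 3 z x) (hQx : Q x ≠ 0)
    (hd₂ : d₂ x = c₂ x + 3 * deriv Q x / Q x)
    (hd₁ : d₁ x = c₁ x + 2 * c₂ x * deriv Q x / Q x + 3 * deriv (deriv Q) x / Q x)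
    (hd₀ : d₀ x = c₀ x + c₂ x * deriv (deriv Q) x / Q x + c₁ x * deriv Q x / Q x
      + deriv (deriv (deriv Q)) x / Q x) :
    thirdOrderOp c₂ c₁ c₀ (fun u => Q u * z u) x = Q x * thirdOrderOp d₂ d₁ d₀ z x := by
  rw [thirdOrderOp, thirdOrderOp, deriv_deriv_deriv_fun_mul hQ hz,
    deriv_deriv_fun_mul (hQ.of_le (by norm_num)) (hz.of_le (by norm_num)),
    deriv_fun_mul (hQ.differentiableAt (by norm_num)) (hz.differentiableAt (by norm_num)),
    hd₂, hd₁, hd₀]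
  field_simp
  ring

noncomputable def semiInvariant₁ (c₂ c₁ : 𝕜 → 𝕜) (x : 𝕜) : 𝕜 :=
  deriv c₂ x + c₂ x ^ 2 / 3 - c₁ x

noncomputable def semiInvariant₀ (c₂ c₁ c₀ : 𝕜 → 𝕜) (x : 𝕜) : 𝕜 :=
  deriv (deriv c₂) x / 3 - 2 * c₂ x ^ 3 / 27 + c₁ x * c₂ x / 3 - c₀ x

section SemiInvariants

variable [CharZero 𝕜]

theorem semiInvariant₁_gauge (hs : IsOpen s) (hx : x ∈ s) (hc₂ : ContDiffOn 𝕜 1 c₂ s)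
    (hr : ContDiffOn 𝕜 1 r s) (hd₂ : EqOn d₂ (fun u => c₂ u + 3 * r u) s)
    (hd₁ : d₁ x = c₁ x + 2 * c₂ x * r x + 3 * (deriv r x + r x ^ 2)) :
    semiInvariant₁ d₂ d₁ x = semiInvariant₁ c₂ c₁ x := by
  have hd₂' := iteratedDeriv_eq_add_const_mul_of_eqOn hs hx (n := 1) hc₂ hr 3 hd₂
  rw [iteratedDeriv_one, iteratedDeriv_one, iteratedDeriv_one] at hd₂'
  rw [semiInvariant₁, semiInvariant₁, hd₂', hd₂ hx, hd₁]
  ring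

theorem semiInvariant₀_gauge (hs : IsOpen s) (hx : x ∈ s) (hc₂ : ContDiffOn 𝕜 2 c₂ s)
    (hr : ContDiffOn 𝕜 2 r s) (hd₂ : EqOn d₂ (fun u => c₂ u + 3 * r u) s)
    (hd₁ : d₁ x = c₁ x + 2 * c₂ x * r x + 3 * (deriv r x + r x ^ 2))
    (hd₀ : d₀ x = c₀ x + c₂ x * (deriv r x + r x ^ 2) + c₁ x * r x
      + (deriv (deriv r) x + 3 * r x * deriv r x + r x ^ 3)) :
    semiInvariant₀ d₂ d₁ d₀ x = semiInvariant₀ c₂ c₁ c₀ x := by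
  have hd₂'' := iteratedDeriv_eq_add_const_mul_of_eqOn hs hx (n := 2) hc₂ hr 3 hd₂
  simp only [iteratedDeriv_succ, iteratedDeriv_zero] at hd₂''
  rw [semiInvariant₀, semiInvariant₀, hd₂'', hd₂ hx, hd₁, hd₀]
  ring

end SemiInvariants

theorem stmt_1_general (a b : ℝ) (J : Set ℝ) (hJ : J = Set.Ioo a b)
    (c₂ c₁ c₀ P : ℝ → ℝ)
    (hc₂ : ContDiffOn ℝ 2 c₂ J)
    (hP : ContDiffOn ℝ 3 P J) (hPne : ∀ x ∈ J, P x ≠ 0)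
    (Q : ℝ → ℝ) (hQ : ∀ x, Q x = 1 / P x)
    (tc₂ tc₁ tc₀ : ℝ → ℝ)
    (htc₂ : ∀ x ∈ J, tc₂ x = c₂ x + 3 * deriv Q x / Q x)
    (htc₁ : ∀ x ∈ J, tc₁ x = c₁ x + 2 * c₂ x * deriv Q x / Q x
        + 3 * deriv (deriv Q) x / Q x)
    (htc₀ : ∀ x ∈ J, tc₀ x = c₀ x + c₂ x * deriv (deriv Q) x / Q x
        + c₁ x * deriv Q x / Q x + deriv (deriv (deriv Q)) x / Q x) :
    (∀ y : ℝ → ℝ, ContDiffOn ℝ 3 y J →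
      ((∀ x ∈ J, deriv (deriv (deriv y)) x + c₂ x * deriv (deriv y) x
          + c₁ x * deriv y x + c₀ x * y x = 0) ↔
        (∀ x ∈ J, deriv (deriv (deriv (fun u => P u * y u))) x
          + tc₂ x * deriv (deriv (fun u => P u * y u)) x
          + tc₁ x * deriv (fun u => P u * y u) x
          + tc₀ x * (P x * y x) = 0))) ∧
    (ContDiffOn ℝ 5 P J →
      ∀ x ∈ J,
        deriv tc₂ x + (tc₂ x) ^ 2 / 3 - tc₁ x
          = deriv c₂ x + (c₂ x) ^ 2 / 3 - c₁ x ∧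
        deriv (deriv tc₂) x / 3 - 2 * (tc₂ x) ^ 3 / 27 + tc₁ x * tc₂ x / 3 - tc₀ x
          = deriv (deriv c₂) x / 3 - 2 * (c₂ x) ^ 3 / 27 + c₁ x * c₂ x / 3 - c₀ x) := by
  have hJo : IsOpen J := hJ ▸ isOpen_Ioo
  have hQP : Q = fun x => (P x)⁻¹ := funext fun x => (hQ x).trans (one_div _)
  have hQ3 : ContDiffOn ℝ 3 Q J := hQP ▸ hP.inv hPne
  have hQ0 : ∀ x ∈ J, Q x ≠ 0 := fun x hx => hQP ▸ inv_ne_zero (hPne x hx)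
  refine ⟨fun y hy => forall₂_congr fun x hx => ?_, fun _ x hx => ?_⟩
  · have hy' : EqOn y (fun u => Q u * (P u * y u)) J := fun u hu => by
      simp only [hQP, inv_mul_cancel_left₀ (hPne u hu)]
    have key := (thirdOrderOp_congr hJo hy' hx).trans <|
      thirdOrderOp_fun_mul (hQ3.contDiffAt (hJo.mem_nhds hx))
        ((hP.mul hy).contDiffAt (hJo.mem_nhds hx)) (hQ0 x hx) (htc₂ x hx) (htc₁ x hx) (htc₀ x hx)
    change thirdOrderOp c₂ c₁ c₀ y x = 0 ↔ thirdOrderOp tc₂ tc₁ tc₀ (fun u => P u * y u) x = 0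
    rw [key, mul_eq_zero, or_iff_right (hQ0 x hx)]
  · have hr : ContDiffOn ℝ 2 (logDeriv Q) J := hQ3.logDeriv hJo hQ0 (by norm_num)
    have hQ'' := deriv_deriv_div_self hJo (hQ3.of_le (by norm_num)) hQ0 hx
    have htc₂' : EqOn tc₂ (fun u => c₂ u + 3 * logDeriv Q u) J := fun u hu => by
      rw [htc₂ u hu, mul_div_assoc]
      rfl
    have htc₁' := htc₁ x hx
    have htc₀' := htc₀ x hx
    rw [mul_div_assoc, mul_div_assoc, ← logDeriv_apply, hQ''] at htc₁'
    rw [mul_div_assoc, mul_div_assoc, ← logDeriv_apply, hQ'',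
      deriv_deriv_deriv_div_self hJo hQ3 hQ0 hx] at htc₀'
    exact ⟨semiInvariant₁_gauge hJo hx (hc₂.of_le (by norm_num)) (hr.of_le (by norm_num)) htc₂'
        htc₁', semiInvariant₀_gauge hJo hx hc₂ hr htc₂' htc₁' htc₀'⟩

/-- (i) `y` solves `y''' + c₂y'' + c₁y' + c₀y = 0` iff `z = P·y` solves the
transformed equation with coefficients `c̃₂ = c₂ + 3Q'/Q`,
`c̃₁ = c₁ + 2c₂Q'/Q + 3Q''/Q`, `c̃₀ = c₀ + c₂Q''/Q + c₁Q'/Q + Q'''/Q` where `Q = 1/P`;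
(ii) if `P` is C⁵, the semi-invariants `I₁ = c₂' + c₂²/3 - c₁` and
`I₀ = c₂''/3 - 2c₂³/27 + c₁c₂/3 - c₀` are unchanged. -/
theorem stmt_1 (a b : ℝ) (J : Set ℝ) (hJ : J = Set.Ioo a b)
    (c₂ c₁ c₀ P : ℝ → ℝ)
    (hc₂ : ContDiffOn ℝ 2 c₂ J) (hc₁ : ContDiffOn ℝ 1 c₁ J) (hc₀ : ContinuousOn c₀ J)
    (hP : ContDiffOn ℝ 3 P J) (hPne : ∀ x ∈ J, P x ≠ 0)
    (Q : ℝ → ℝ) (hQ : ∀ x, Q x = 1 / P x)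
    (tc₂ tc₁ tc₀ : ℝ → ℝ)
    (htc₂ : ∀ x ∈ J, tc₂ x = c₂ x + 3 * deriv Q x / Q x)
    (htc₁ : ∀ x ∈ J, tc₁ x = c₁ x + 2 * c₂ x * deriv Q x / Q x
        + 3 * deriv (deriv Q) x / Q x)
    (htc₀ : ∀ x ∈ J, tc₀ x = c₀ x + c₂ x * deriv (deriv Q) x / Q x
        + c₁ x * deriv Q x / Q x + deriv (deriv (deriv Q)) x / Q x) :
    (∀ y : ℝ → ℝ, ContDiffOn ℝ 3 y J →
      ((∀ x ∈ J, deriv (deriv (deriv y)) x + c₂ x * deriv (deriv y) x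
          + c₁ x * deriv y x + c₀ x * y x = 0) ↔
        (∀ x ∈ J, deriv (deriv (deriv (fun u => P u * y u))) x
          + tc₂ x * deriv (deriv (fun u => P u * y u)) x
          + tc₁ x * deriv (fun u => P u * y u) x
          + tc₀ x * (P x * y x) = 0))) ∧
    (ContDiffOn ℝ 5 P J →
      ∀ x ∈ J,
        deriv tc₂ x + (tc₂ x) ^ 2 / 3 - tc₁ x
          = deriv c₂ x + (c₂ x) ^ 2 / 3 - c₁ x ∧
        deriv (deriv tc₂) x / 3 - 2 * (tc₂ x) ^ 3 / 27 + tc₁ x * tc₂ x / 3 - tc₀ x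
          = deriv (deriv c₂) x / 3 - 2 * (c₂ x) ^ 3 / 27 + c₁ x * c₂ x / 3 - c₀ x) :=
  stmt_1_general a b J hJ c₂ c₁ c₀ P hc₂ hP hPne Q hQ tc₂ tc₁ tc₀ htc₂ htc₁ htc₀
end

section
/- Let I, J ⊆ ℝ be open intervals, let I₁ be C¹ and I₀ continuous on J, let F : I → ℝ be C⁴ with F' never zero and F(I) ⊆ J, and let y be C³ on J with y''' = I₁y' + I₀y on J. Define the Schwarzian S(F) = F'''/F' - (3/2)(F''/F')² and the transformed invariants Ĩ₁(x) = F'(x)²·I₁(F(x)) - 2·S(F)(x) and Ĩ₀(x) = F'(x)·F''(x)·I₁(F(x)) + F'(x)³·I₀(F(x)) - (S(F))'(x). Then the function v(x) = y(F(x))/F'(x) is C³ on I and satisfies v''' = Ĩ₁v' + Ĩ₀v on I. -/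
/-!
With `v = (y ∘ F) / F'`, the chain and quotient rules give `v'''` in terms of
`y ∘ F, …, y''' ∘ F` and `F', …, F''''`. The `y'' ∘ F` terms cancel, and after substituting
`y''' = I₁ y' + I₀ y` the coefficients of `y' ∘ F` and `y ∘ F` regroup as `Ĩ₁ v' + Ĩ₀ v`:
the Schwarzian and its derivative are exactly the combinations of `F', …, F''''` that occur.
-/

open Set

section IterateDeriv

variable {𝕜 E : Type*} [NontriviallyNormedField 𝕜] [NormedAddCommGroup E] [NormedSpace 𝕜 E]
  {f g : 𝕜 → E} {U : Set 𝕜}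

theorem ContDiffOn.iterate_deriv_of_isOpen {n k : ℕ}
    (hf : ContDiffOn 𝕜 n f U) (hU : IsOpen U) (hk : k ≤ n) :
    ContDiffOn 𝕜 (n - k : ℕ) (deriv^[k] f) U := by
  induction k with
  | zero => simpa using hf
  | succ k ih =>
    rw [Function.iterate_succ_apply']
    exact (ih (by omega)).deriv_of_isOpen hU (by norm_cast; omega)

theorem ContDiffOn.hasDerivAt_iterate_deriv {n k : ℕ}
    (hf : ContDiffOn 𝕜 n f U) (hU : IsOpen U) (hk : k + 1 ≤ n) {x : 𝕜} (hx : x ∈ U) :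
    HasDerivAt (deriv^[k] f) (deriv^[k + 1] f x) x := by
  rw [Function.iterate_succ_apply']
  have hfk := (hf.iterate_deriv_of_isOpen hU (by omega : k ≤ n)).contDiffAt (hU.mem_nhds hx)
  exact (hfk.differentiableAt (by norm_cast; omega)).hasDerivAt

theorem HasDerivAt.congr_of_eqOn_of_isOpen {x : 𝕜} {c : E}
    (hg : HasDerivAt g c x) (hU : IsOpen U) (hx : x ∈ U) (hfg : EqOn f g U) :
    HasDerivAt f c x :=
  hg.congr_of_eventuallyEq (hfg.eventuallyEq_of_mem (hU.mem_nhds hx))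

end IterateDeriv

/-- The Schwarzian `S(F)`, with `F₁, F₂, F₃` standing for `F', F'', F'''`. -/
noncomputable def schwarzian (F₁ F₂ F₃ : ℝ → ℝ) (t : ℝ) : ℝ :=
  F₃ t / F₁ t - 3 / 2 * (F₂ t / F₁ t) ^ 2

section ChangeOfVariable

variable {F F₁ F₂ F₃ y y₁ y₂ : ℝ → ℝ} {x : ℝ}

theorem hasDerivAt_schwarzian {F₄ : ℝ} (hF₁ : HasDerivAt F₁ (F₂ x) x)
    (hF₂ : HasDerivAt F₂ (F₃ x) x) (hF₃ : HasDerivAt F₃ F₄ x) (h0 : F₁ x ≠ 0) :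
    HasDerivAt (schwarzian F₁ F₂ F₃)
      (F₄ / F₁ x - 4 * F₂ x * F₃ x / F₁ x ^ 2 + 3 * F₂ x ^ 3 / F₁ x ^ 3) x := by
  refine ((hF₃.div hF₁ h0).sub
    (((hF₂.div hF₁ h0).pow 2).const_mul (3 / 2))).congr_deriv ?_
  simp only [Pi.div_apply, Nat.add_one_sub_one, pow_one]
  field_simp
  ring

theorem hasDerivAt_comp_div (hy : HasDerivAt y (y₁ (F x)) (F x)) (hF : HasDerivAt F (F₁ x) x)
    (hF₁ : HasDerivAt F₁ (F₂ x) x) (h0 : F₁ x ≠ 0) :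
    HasDerivAt (fun t => y (F t) / F₁ t) (y₁ (F x) - y (F x) * F₂ x / F₁ x ^ 2) x := by
  refine ((hy.comp x hF).div hF₁ h0).congr_deriv ?_
  simp only [Function.comp_apply]
  field_simp

theorem hasDerivAt_comp_div_deriv (hy : HasDerivAt y (y₁ (F x)) (F x))
    (hy₁ : HasDerivAt y₁ (y₂ (F x)) (F x)) (hF : HasDerivAt F (F₁ x) x)
    (hF₁ : HasDerivAt F₁ (F₂ x) x) (hF₂ : HasDerivAt F₂ (F₃ x) x) (h0 : F₁ x ≠ 0) :
    HasDerivAt (fun t => y₁ (F t) - y (F t) * F₂ t / F₁ t ^ 2)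
      (y₂ (F x) * F₁ x - y₁ (F x) * F₂ x / F₁ x - y (F x) * F₃ x / F₁ x ^ 2
        + 2 * y (F x) * F₂ x ^ 2 / F₁ x ^ 3) x := by
  refine ((hy₁.comp x hF).sub
    (((hy.comp x hF).mul hF₂).div (hF₁.pow 2) (pow_ne_zero 2 h0))).congr_deriv ?_
  simp only [Function.comp_apply, Pi.mul_apply, Pi.pow_apply]
  field_simp
  ring

theorem hasDerivAt_comp_div_deriv_deriv {F₄ i₁ i₀ S' : ℝ}
    (hy : HasDerivAt y (y₁ (F x)) (F x)) (hy₁ : HasDerivAt y₁ (y₂ (F x)) (F x))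
    (hy₂ : HasDerivAt y₂ (i₁ * y₁ (F x) + i₀ * y (F x)) (F x))
    (hF : HasDerivAt F (F₁ x) x) (hF₁ : HasDerivAt F₁ (F₂ x) x)
    (hF₂ : HasDerivAt F₂ (F₃ x) x) (hF₃ : HasDerivAt F₃ F₄ x)
    (hS : HasDerivAt (schwarzian F₁ F₂ F₃) S' x) (h0 : F₁ x ≠ 0) :
    HasDerivAt (fun t => y₂ (F t) * F₁ t - y₁ (F t) * F₂ t / F₁ t
        - y (F t) * F₃ t / F₁ t ^ 2 + 2 * y (F t) * F₂ t ^ 2 / F₁ t ^ 3)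
      ((F₁ x ^ 2 * i₁ - 2 * schwarzian F₁ F₂ F₃ x)
          * (y₁ (F x) - y (F x) * F₂ x / F₁ x ^ 2)
        + (F₁ x * F₂ x * i₁ + F₁ x ^ 3 * i₀ - S') * (y (F x) / F₁ x)) x := by
  rw [hS.unique (hasDerivAt_schwarzian hF₁ hF₂ hF₃ h0)]
  have hyF := hy.comp x hF
  refine (((((hy₂.comp x hF).mul hF₁).sub (((hy₁.comp x hF).mul hF₂).div hF₁ h0)).sub
    ((hyF.mul hF₃).div (hF₁.pow 2) (pow_ne_zero 2 h0))).add
    (((hyF.const_mul 2).mul (hF₂.pow 2)).div (hF₁.pow 3) (pow_ne_zero 3 h0))).congr_deriv ?_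
  simp only [schwarzian, Function.comp_apply, Pi.mul_apply, Pi.pow_apply]
  field_simp
  ring

theorem deriv_deriv_deriv_eq_of_eqOn_comp_div {U V : Set ℝ} {I₁ I₀ v : ℝ → ℝ}
    (hU : IsOpen U) (hV : IsOpen V) (hF : ContDiffOn ℝ 4 F U) (hF' : ∀ x ∈ U, deriv F x ≠ 0)
    (hFUV : MapsTo F U V) (hy : ContDiffOn ℝ 3 y V)
    (hode : ∀ u ∈ V, deriv (deriv (deriv y)) u = I₁ u * deriv y u + I₀ u * y u)
    (hv : EqOn v (fun t => y (F t) / deriv F t) U) (hx : x ∈ U) :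
    deriv (deriv (deriv v)) x =
      (deriv F x ^ 2 * I₁ (F x)
          - 2 * schwarzian (deriv F) (deriv (deriv F)) (deriv (deriv (deriv F))) x) * deriv v x
        + (deriv F x * deriv (deriv F) x * I₁ (F x) + deriv F x ^ 3 * I₀ (F x)
          - deriv (schwarzian (deriv F) (deriv (deriv F)) (deriv (deriv (deriv F)))) x) * v x := by
  have dF : ∀ x ∈ U, HasDerivAt F (deriv F x) x ∧
      HasDerivAt (deriv F) (deriv (deriv F) x) x ∧
      HasDerivAt (deriv (deriv F)) (deriv (deriv (deriv F)) x) x ∧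
      HasDerivAt (deriv (deriv (deriv F))) (deriv (deriv (deriv (deriv F))) x) x :=
    fun x hx => ⟨hF.hasDerivAt_iterate_deriv hU (k := 0) (by norm_num) hx,
      hF.hasDerivAt_iterate_deriv hU (k := 1) (by norm_num) hx,
      hF.hasDerivAt_iterate_deriv hU (k := 2) (by norm_num) hx,
      hF.hasDerivAt_iterate_deriv hU (k := 3) (by norm_num) hx⟩
  have dy : ∀ x ∈ U, HasDerivAt y (deriv y (F x)) (F x) ∧
      HasDerivAt (deriv y) (deriv (deriv y) (F x)) (F x) ∧
      HasDerivAt (deriv (deriv y)) (I₁ (F x) * deriv y (F x) + I₀ (F x) * y (F x)) (F x) :=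
    fun x hx => ⟨hy.hasDerivAt_iterate_deriv hV (k := 0) (by norm_num) (hFUV hx),
      hy.hasDerivAt_iterate_deriv hV (k := 1) (by norm_num) (hFUV hx),
      hode _ (hFUV hx) ▸ hy.hasDerivAt_iterate_deriv hV (k := 2) (by norm_num) (hFUV hx)⟩
  have dv : ∀ x ∈ U, HasDerivAt v _ x := fun x hx =>
    (hasDerivAt_comp_div (dy x hx).1 (dF x hx).1 (dF x hx).2.1
      (hF' x hx)).congr_of_eqOn_of_isOpen hU hx hv
  have dv' : ∀ x ∈ U, HasDerivAt (deriv v) _ x := fun x hx =>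
    (hasDerivAt_comp_div_deriv (dy x hx).1 (dy x hx).2.1 (dF x hx).1 (dF x hx).2.1
      (dF x hx).2.2.1 (hF' x hx)).congr_of_eqOn_of_isOpen hU hx fun z hz => (dv z hz).deriv
  have dS := hasDerivAt_schwarzian (dF x hx).2.1 (dF x hx).2.2.1 (dF x hx).2.2.2 (hF' x hx)
  have dv'' := (hasDerivAt_comp_div_deriv_deriv (dy x hx).1 (dy x hx).2.1 (dy x hx).2.2
    (dF x hx).1 (dF x hx).2.1 (dF x hx).2.2.1 (dF x hx).2.2.2 dS
    (hF' x hx)).congr_of_eqOn_of_isOpen hU hx fun z hz => (dv' z hz).deriv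
  rw [dv''.deriv, (dv x hx).deriv, dS.deriv, hv hx]

end ChangeOfVariable

theorem stmt_4_general (a b a' b' : ℝ) (I J : Set ℝ)
    (hI : I = Set.Ioo a b) (hJ : J = Set.Ioo a' b')
    (I₁ I₀ : ℝ → ℝ)
    (F : ℝ → ℝ) (hF : ContDiffOn ℝ 4 F I)
    (hF' : ∀ x ∈ I, deriv F x ≠ 0) (hFI : Set.MapsTo F I J)
    (y : ℝ → ℝ) (hy : ContDiffOn ℝ 3 y J)
    (hode : ∀ u ∈ J, deriv (deriv (deriv y)) u = I₁ u * deriv y u + I₀ u * y u)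
    (SF : ℝ → ℝ)
    (hSF : ∀ x ∈ I, SF x = deriv (deriv (deriv F)) x / deriv F x
        - (3 / 2) * (deriv (deriv F) x / deriv F x) ^ 2)
    (tI₁ tI₀ : ℝ → ℝ)
    (htI₁ : ∀ x ∈ I, tI₁ x = (deriv F x) ^ 2 * I₁ (F x) - 2 * SF x)
    (htI₀ : ∀ x ∈ I, tI₀ x = deriv F x * deriv (deriv F) x * I₁ (F x)
        + (deriv F x) ^ 3 * I₀ (F x) - deriv SF x)
    (v : ℝ → ℝ) (hv : ∀ x ∈ I, v x = y (F x) / deriv F x) :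
    ContDiffOn ℝ 3 v I ∧
      ∀ x ∈ I, deriv (deriv (deriv v)) x = tI₁ x * deriv v x + tI₀ x * v x := by
  have hIo : IsOpen I := hI ▸ isOpen_Ioo
  have hS : EqOn SF (schwarzian (deriv F) (deriv (deriv F)) (deriv (deriv (deriv F)))) I := hSF
  refine ⟨((hy.comp (hF.of_le (by norm_num)) hFI).div
    (hF.deriv_of_isOpen hIo (by norm_num)) hF').congr hv, fun x hx => ?_⟩
  rw [deriv_deriv_deriv_eq_of_eqOn_comp_div hIo (hJ ▸ isOpen_Ioo) hF hF' hFI hy hode hv hx,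
    htI₁ x hx, htI₀ x hx, (hS.eventuallyEq_of_mem (hIo.mem_nhds hx)).deriv_eq, hS hx]

/-- Change of independent variable `x → F(x)` in the normal form equation
`y''' = I₁ y' + I₀ y`: the function `v(x) = y(F(x))/F'(x)` is C³ and satisfies
`v''' = Ĩ₁ v' + Ĩ₀ v` with `Ĩ₁ = F'²·I₁∘F - 2S(F)` and
`Ĩ₀ = F'F''·I₁∘F + F'³·I₀∘F - S(F)'`, where `S(F)` is the Schwarzian. -/
theorem stmt_4 (a b a' b' : ℝ) (I J : Set ℝ)
    (hI : I = Set.Ioo a b) (hJ : J = Set.Ioo a' b')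
    (I₁ I₀ : ℝ → ℝ) (hI₁ : ContDiffOn ℝ 1 I₁ J) (hI₀ : ContinuousOn I₀ J)
    (F : ℝ → ℝ) (hF : ContDiffOn ℝ 4 F I)
    (hF' : ∀ x ∈ I, deriv F x ≠ 0) (hFI : Set.MapsTo F I J)
    (y : ℝ → ℝ) (hy : ContDiffOn ℝ 3 y J)
    (hode : ∀ u ∈ J, deriv (deriv (deriv y)) u = I₁ u * deriv y u + I₀ u * y u)
    (SF : ℝ → ℝ)
    (hSF : ∀ x ∈ I, SF x = deriv (deriv (deriv F)) x / deriv F x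
        - (3 / 2) * (deriv (deriv F) x / deriv F x) ^ 2)
    (tI₁ tI₀ : ℝ → ℝ)
    (htI₁ : ∀ x ∈ I, tI₁ x = (deriv F x) ^ 2 * I₁ (F x) - 2 * SF x)
    (htI₀ : ∀ x ∈ I, tI₀ x = deriv F x * deriv (deriv F) x * I₁ (F x)
        + (deriv F x) ^ 3 * I₀ (F x) - deriv SF x)
    (v : ℝ → ℝ) (hv : ∀ x ∈ I, v x = y (F x) / deriv F x) :
    ContDiffOn ℝ 3 v I ∧
      ∀ x ∈ I, deriv (deriv (deriv v)) x = tI₁ x * deriv v x + tI₀ x * v x :=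
  stmt_4_general a b a' b' I J hI hJ I₁ I₀ F hF hF' hFI y hy hode SF hSF tI₁ tI₀ htI₁ htI₀ v hv
end

section
/- Let I, J ⊆ ℝ be open intervals, let I₁ and I₀ be C^∞ on J, and let F : I → ℝ be C^∞ with F' never zero and F(I) ⊆ J. Define Ĩ₁(x) = F'(x)²·I₁(F(x)) - 2S(F)(x) and Ĩ₀(x) = F'(x)F''(x)·I₁(F(x)) + F'(x)³·I₀(F(x)) - (S(F))'(x), where S(F) = F'''/F' - (3/2)(F''/F')². Let r = I₁' - 2I₀ and r̃ = Ĩ₁' - 2Ĩ₀, and suppose r(F(x)) ≠ 0 for all x ∈ I. Define L₁ = (6rr'' + 9I₁r² - 7(r')²)³ / r⁸ from I₁, r, and L̃₁ = (6r̃r̃'' + 9Ĩ₁r̃² - 7(r̃')²)³ / r̃⁸ from Ĩ₁, r̃. Then L₁ is an absolute invariant: for all x ∈ I, L̃₁(x) = L₁(F(x)). -/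
/-!
Since `S(F)` enters `Ĩ₁` with coefficient `-2` and `Ĩ₀` through `-(S F)'`, it cancels from
`r̃ = Ĩ₁' - 2Ĩ₀`, leaving `r̃ = F'³ · (r ∘ F)`: `r` is a relative invariant of weight 3.
Differentiating twice and substituting `Ĩ₁`, the Schwarzian cancels once more and
`6r̃r̃'' + 9Ĩ₁r̃² - 7r̃'² = F'⁸ · (6rr'' + 9I₁r² - 7r'²) ∘ F`, so the numerator and the
denominator of `L̃₁` both acquire the factor `F'²⁴`.
-/

open Filter Set Topology
open scoped ContDiff

theorem ContDiffOn.differentiableAt_of_isOpen {f : ℝ → ℝ} {s : Set ℝ} {n : WithTop ℕ∞} {x : ℝ}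
    (hf : ContDiffOn ℝ n f s) (hs : IsOpen s) (hn : n ≠ 0) (hx : x ∈ s) :
    DifferentiableAt ℝ f x :=
  (hf.differentiableOn hn).differentiableAt (hs.mem_nhds hx)

section Jets

variable {F ρ : ℝ → ℝ} {x : ℝ}

theorem hasDerivAt_mul_comp {c : ℝ → ℝ} {c' : ℝ} (hc : HasDerivAt c c' x)
    (hF : DifferentiableAt ℝ F x) (hρ : DifferentiableAt ℝ ρ (F x)) :
    HasDerivAt (fun y => c y * ρ (F y)) (c' * ρ (F x) + c x * (deriv ρ (F x) * deriv F x)) x :=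
  hc.mul (hρ.hasDerivAt.comp x hF.hasDerivAt)

theorem hasDerivAt_deriv_pow_mul_comp (n : ℕ) (hF : DifferentiableAt ℝ F x)
    (hF' : DifferentiableAt ℝ (deriv F) x) (hρ : DifferentiableAt ℝ ρ (F x)) :
    HasDerivAt (fun y => deriv F y ^ n * ρ (F y))
      (n * deriv F x ^ (n - 1) * deriv (deriv F) x * ρ (F x)
        + deriv F x ^ (n + 1) * deriv ρ (F x)) x := by
  convert hasDerivAt_mul_comp (hF'.hasDerivAt.fun_pow n) hF hρ using 1
  ring

theorem deriv_sub_two_mul_eq_deriv_pow_three_mul {I₁ I₀ S tI₁ tI₀ : ℝ → ℝ}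
    (hF : DifferentiableAt ℝ F x) (hF' : DifferentiableAt ℝ (deriv F) x)
    (hI₁ : DifferentiableAt ℝ I₁ (F x)) (hS : DifferentiableAt ℝ S x)
    (htI₁ : tI₁ =ᶠ[𝓝 x] fun y => deriv F y ^ 2 * I₁ (F y) - 2 * S y)
    (htI₀ : tI₀ x = deriv F x * deriv (deriv F) x * I₁ (F x)
        + deriv F x ^ 3 * I₀ (F x) - deriv S x) :
    deriv tI₁ x - 2 * tI₀ x = deriv F x ^ 3 * (deriv I₁ (F x) - 2 * I₀ (F x)) := by
  rw [htI₁.deriv_eq, ((hasDerivAt_deriv_pow_mul_comp 2 hF hF' hI₁).fun_sub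
    (hS.hasDerivAt.const_mul 2)).deriv, htI₀]
  push_cast
  ring

variable {U V : Set ℝ} {g : ℝ → ℝ} (hU : IsOpen U) (hV : IsOpen V) (hF : ContDiffOn ℝ 3 F U)
  (hρ : ContDiffOn ℝ 2 ρ V) (hFUV : MapsTo F U V)
  (hg : EqOn g (fun y => deriv F y ^ 3 * ρ (F y)) U)
include hU hV hF hρ hFUV hg

theorem eqOn_deriv_of_eqOn_deriv_pow_three_mul_comp :
    EqOn (deriv g) (fun y => 3 * deriv F y ^ 2 * deriv (deriv F) y * ρ (F y)
      + deriv F y ^ 4 * deriv ρ (F y)) U := by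
  intro y hy
  rw [(hg.eventuallyEq_of_mem (hU.mem_nhds hy)).deriv_eq]
  convert (hasDerivAt_deriv_pow_mul_comp 3 (hF.differentiableAt_of_isOpen hU (by simp) hy)
    ((hF.deriv_of_isOpen hU (m := 2) (by norm_num)).differentiableAt_of_isOpen hU (by simp) hy)
    (hρ.differentiableAt_of_isOpen hV (by simp) (hFUV hy))).deriv using 1
  norm_num

theorem deriv_deriv_of_eqOn_deriv_pow_three_mul_comp (hx : x ∈ U) :
    deriv (deriv g) x = (6 * deriv F x * deriv (deriv F) x ^ 2
        + 3 * deriv F x ^ 2 * deriv (deriv (deriv F)) x) * ρ (F x)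
      + 7 * deriv F x ^ 3 * deriv (deriv F) x * deriv ρ (F x)
      + deriv F x ^ 5 * deriv (deriv ρ) (F x) := by
  have hF₀ := hF.differentiableAt_of_isOpen hU (by simp) hx
  have hF₁ := (hF.deriv_of_isOpen hU (m := 2) (by norm_num)).differentiableAt_of_isOpen hU
    (by simp) hx
  have hF₂ := (hF.deriv_of_isOpen hU (m := 2) (by norm_num) |>.deriv_of_isOpen hU (m := 1)
    (by norm_num)).differentiableAt_of_isOpen hU (by simp) hx
  have hρ₀ := hρ.differentiableAt_of_isOpen hV (by simp) (hFUV hx)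
  have hρ₁ := (hρ.deriv_of_isOpen hV (m := 1) (by norm_num)).differentiableAt_of_isOpen hV
    (by simp) (hFUV hx)
  have hcoeff := (hF₁.hasDerivAt.fun_pow 2).const_mul 3 |>.fun_mul hF₂.hasDerivAt
  rw [((eqOn_deriv_of_eqOn_deriv_pow_three_mul_comp hU hV hF hρ hFUV hg).eventuallyEq_of_mem
      (hU.mem_nhds hx)).deriv_eq,
    ((hasDerivAt_mul_comp hcoeff hF₀ hρ₀).fun_add
      (hasDerivAt_deriv_pow_mul_comp 4 hF₀ hF₁ hρ₁)).deriv]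
  push_cast
  ring

end Jets

noncomputable def invariantL₁ (i r r' r'' : ℝ) : ℝ :=
  (6 * r * r'' + 9 * i * r ^ 2 - 7 * r' ^ 2) ^ 3 / r ^ 8

theorem invariantL₁_transform {p q s : ℝ} (hp : p ≠ 0) (i r r' r'' : ℝ) :
    invariantL₁ (p ^ 2 * i - 2 * (s / p - 3 / 2 * (q / p) ^ 2)) (p ^ 3 * r)
      (3 * p ^ 2 * q * r + p ^ 4 * r')
      ((6 * p * q ^ 2 + 3 * p ^ 2 * s) * r + 7 * p ^ 3 * q * r' + p ^ 5 * r'') =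
      invariantL₁ i r r' r'' := by
  unfold invariantL₁
  calc _ = p ^ 24 * (6 * r * r'' + 9 * i * r ^ 2 - 7 * r' ^ 2) ^ 3 / (p ^ 24 * r ^ 8) := by
        congr 1
        · field_simp
          ring
        · ring
    _ = _ := mul_div_mul_left _ _ (pow_ne_zero 24 hp)

theorem stmt_7_general (a b a' b' : ℝ) (I J : Set ℝ)
    (hI : I = Set.Ioo a b) (hJ : J = Set.Ioo a' b')
    (I₁ I₀ : ℝ → ℝ) (hI₁ : ContDiffOn ℝ (⊤ : ℕ∞) I₁ J) (hI₀ : ContDiffOn ℝ (⊤ : ℕ∞) I₀ J)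
    (F : ℝ → ℝ) (hF : ContDiffOn ℝ (⊤ : ℕ∞) F I)
    (hF' : ∀ x ∈ I, deriv F x ≠ 0) (hFI : Set.MapsTo F I J)
    (SF : ℝ → ℝ)
    (hSF : ∀ x ∈ I, SF x = deriv (deriv (deriv F)) x / deriv F x
        - (3 / 2) * (deriv (deriv F) x / deriv F x) ^ 2)
    (tI₁ tI₀ : ℝ → ℝ)
    (htI₁ : ∀ x ∈ I, tI₁ x = (deriv F x) ^ 2 * I₁ (F x) - 2 * SF x)
    (htI₀ : ∀ x ∈ I, tI₀ x = deriv F x * deriv (deriv F) x * I₁ (F x)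
        + (deriv F x) ^ 3 * I₀ (F x) - deriv SF x)
    (r tr : ℝ → ℝ)
    (hr : ∀ u ∈ J, r u = deriv I₁ u - 2 * I₀ u)
    (htr : ∀ x ∈ I, tr x = deriv tI₁ x - 2 * tI₀ x)
    (L₁ tL₁ : ℝ → ℝ)
    (hL₁ : ∀ u ∈ J, L₁ u = (6 * r u * deriv (deriv r) u + 9 * I₁ u * (r u) ^ 2
        - 7 * (deriv r u) ^ 2) ^ 3 / (r u) ^ 8)
    (htL₁ : ∀ x ∈ I, tL₁ x = (6 * tr x * deriv (deriv tr) x + 9 * tI₁ x * (tr x) ^ 2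
        - 7 * (deriv tr x) ^ 2) ^ 3 / (tr x) ^ 8) :
    ∀ x ∈ I, tL₁ x = L₁ (F x) := by
  have hIo : IsOpen I := hI ▸ isOpen_Ioo
  have hJo : IsOpen J := hJ ▸ isOpen_Ioo
  have hF₁ := hF.deriv_of_isOpen hIo (m := ∞) le_rfl
  have hF₂ := hF₁.deriv_of_isOpen hIo (m := ∞) le_rfl
  have hr_smooth : ContDiffOn ℝ ∞ r J :=
    ((hI₁.deriv_of_isOpen hJo (m := ∞) le_rfl).sub (contDiffOn_const.mul hI₀)).congr hr
  have hSF_smooth : ContDiffOn ℝ ∞ SF I :=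
    (((hF₂.deriv_of_isOpen hIo (m := ∞) le_rfl).div hF₁ hF').sub
      (contDiffOn_const.mul ((hF₂.div hF₁ hF').pow 2))).congr hSF
  have htr_eq : EqOn tr (fun y => deriv F y ^ 3 * r (F y)) I := fun x hx => by
    show tr x = deriv F x ^ 3 * r (F x)
    rw [htr x hx, hr _ (hFI hx)]
    exact deriv_sub_two_mul_eq_deriv_pow_three_mul
      (hF.differentiableAt_of_isOpen hIo (by simp) hx)
      (hF₁.differentiableAt_of_isOpen hIo (by simp) hx)
      (hI₁.differentiableAt_of_isOpen hJo (by simp) (hFI hx))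
      (hSF_smooth.differentiableAt_of_isOpen hIo (by simp) hx)
      (Set.EqOn.eventuallyEq_of_mem htI₁ (hIo.mem_nhds hx)) (htI₀ x hx)
  have hF₃ : ContDiffOn ℝ 3 F I := hF.of_le (WithTop.coe_le_coe.2 le_top)
  have hr₂ : ContDiffOn ℝ 2 r J := hr_smooth.of_le (WithTop.coe_le_coe.2 le_top)
  intro x hx
  rw [htL₁ x hx, hL₁ _ (hFI hx),
    deriv_deriv_of_eqOn_deriv_pow_three_mul_comp hIo hJo hF₃ hr₂ hFI htr_eq hx,
    eqOn_deriv_of_eqOn_deriv_pow_three_mul_comp hIo hJo hF₃ hr₂ hFI htr_eq hx,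
    htr_eq hx, htI₁ x hx, hSF x hx]
  exact invariantL₁_transform (hF' x hx) _ _ _ _

/-- `L₁ = (6rr'' + 9I₁r² - 7r'²)³/r⁸`, with `r = I₁' - 2I₀`, is an absolute
invariant under a change of independent variable `x → F(x)`: `L̃₁(x) = L₁(F(x))`. -/
theorem stmt_7 (a b a' b' : ℝ) (I J : Set ℝ)
    (hI : I = Set.Ioo a b) (hJ : J = Set.Ioo a' b')
    (I₁ I₀ : ℝ → ℝ) (hI₁ : ContDiffOn ℝ (⊤ : ℕ∞) I₁ J) (hI₀ : ContDiffOn ℝ (⊤ : ℕ∞) I₀ J)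
    (F : ℝ → ℝ) (hF : ContDiffOn ℝ (⊤ : ℕ∞) F I)
    (hF' : ∀ x ∈ I, deriv F x ≠ 0) (hFI : Set.MapsTo F I J)
    (SF : ℝ → ℝ)
    (hSF : ∀ x ∈ I, SF x = deriv (deriv (deriv F)) x / deriv F x
        - (3 / 2) * (deriv (deriv F) x / deriv F x) ^ 2)
    (tI₁ tI₀ : ℝ → ℝ)
    (htI₁ : ∀ x ∈ I, tI₁ x = (deriv F x) ^ 2 * I₁ (F x) - 2 * SF x)
    (htI₀ : ∀ x ∈ I, tI₀ x = deriv F x * deriv (deriv F) x * I₁ (F x)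
        + (deriv F x) ^ 3 * I₀ (F x) - deriv SF x)
    (r tr : ℝ → ℝ)
    (hr : ∀ u ∈ J, r u = deriv I₁ u - 2 * I₀ u)
    (htr : ∀ x ∈ I, tr x = deriv tI₁ x - 2 * tI₀ x)
    (hr0 : ∀ x ∈ I, r (F x) ≠ 0)
    (L₁ tL₁ : ℝ → ℝ)
    (hL₁ : ∀ u ∈ J, L₁ u = (6 * r u * deriv (deriv r) u + 9 * I₁ u * (r u) ^ 2
        - 7 * (deriv r u) ^ 2) ^ 3 / (r u) ^ 8)
    (htL₁ : ∀ x ∈ I, tL₁ x = (6 * tr x * deriv (deriv tr) x + 9 * tI₁ x * (tr x) ^ 2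
        - 7 * (deriv tr x) ^ 2) ^ 3 / (tr x) ^ 8) :
    ∀ x ∈ I, tL₁ x = L₁ (F x) :=
  stmt_7_general a b a' b' I J hI hJ I₁ I₀ hI₁ hI₀ F hF hF' hFI SF hSF tI₁ tI₀ htI₁ htI₀ r tr hr htr
    L₁ tL₁ hL₁ htL₁
end

section
/- Let J ⊆ ℝ be an open interval and let I₁, I₀ be C^∞ functions on J. Set r = I₁' - 2I₀ and assume r is nonvanishing on J. Define L₁ = (6rr'' + 9I₁r² - 7(r')²)³/r⁸ and L₂ = (27I₁'r³ - 18I₁r²r' + 56(r')³ - 72r''r'r + 18r'''r²)/r⁴, and assume L₁' is nonvanishing on J. Define s = L₂L₁/L₁' and t = L₁/s³, and assume s and t are nonvanishing on J. Then the invariants can be recovered from s and t: I₁ = (st³ - 6t''t + 7(t')²)/(9t²) and I₀ = ((s' - 9)t⁴ + t'st³ - 6t'''t² + 20t''t't - 14(t')³)/(18t³) on J. -/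
/-!
Write `P = 6rr'' + 9I₁r² - 7r'²` and `Q` for the numerator of `L₂`, so that `L₁ = P³/r⁸` and
`L₂ = Q/r⁴`. The identity `3P'r - 8Pr' = Q` gives `L₁' = P²Q/r⁹`, hence `s = L₂L₁/L₁' = P/r³` and
`t = L₁/s³ = r`. The formula for `I₁` is `P = sr³` solved for `I₁`; the one for `I₀` is
`r = I₁' - 2I₀` with `I₁'` read off from `s' = (P'r - 3Pr')/r⁴`.
-/

open Set Filter Topology

/-- The relative invariants `P` and `Q` above, of weights 8 and 12. -/
noncomputable def relInv₈ (I₁ r : ℝ → ℝ) (x : ℝ) : ℝ :=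
  6 * r x * deriv (deriv r) x + 9 * I₁ x * r x ^ 2 - 7 * deriv r x ^ 2

noncomputable def relInv₁₂ (I₁ r : ℝ → ℝ) (x : ℝ) : ℝ :=
  27 * deriv I₁ x * r x ^ 3 - 18 * I₁ x * r x ^ 2 * deriv r x + 56 * deriv r x ^ 3
    - 72 * deriv (deriv r) x * deriv r x * r x + 18 * deriv (deriv (deriv r)) x * r x ^ 2

theorem mul_div_eq_and_div_pow_eq {P Q r L₁ L₂ L₁' : ℝ} (hr : r ≠ 0) (hL₁ : L₁ = P ^ 3 / r ^ 8)
    (hL₂ : L₂ = Q / r ^ 4) (hL₁' : L₁' = P ^ 2 * Q / r ^ 9) (hL₁'0 : L₁' ≠ 0) :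
    L₂ * L₁ / L₁' = P / r ^ 3 ∧ L₁ / (P / r ^ 3) ^ 3 = r := by
  subst hL₁ hL₂ hL₁'
  have hP : P ≠ 0 := by rintro rfl; simp at hL₁'0
  have hQ : Q ≠ 0 := by rintro rfl; simp at hL₁'0
  constructor <;> field_simp

section Pointwise

variable {I₁ r : ℝ → ℝ} {x : ℝ}

theorem hasDerivAt_relInv₈ (hI₁ : DifferentiableAt ℝ I₁ x) (hr : DifferentiableAt ℝ r x)
    (hr' : DifferentiableAt ℝ (deriv r) x) (hr'' : DifferentiableAt ℝ (deriv (deriv r)) x) :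
    HasDerivAt (relInv₈ I₁ r)
      (6 * r x * deriv (deriv (deriv r)) x - 8 * deriv r x * deriv (deriv r) x
        + 9 * deriv I₁ x * r x ^ 2 + 18 * I₁ x * r x * deriv r x) x := by
  refine ((((hr.hasDerivAt.const_mul 6).mul hr''.hasDerivAt).add
    ((hI₁.hasDerivAt.const_mul 9).mul (hr.hasDerivAt.pow 2))).sub
    ((hr'.hasDerivAt.pow 2).const_mul 7)).congr_deriv ?_
  norm_num
  ring

theorem hasDerivAt_relInv₈_pow_three_div (hI₁ : DifferentiableAt ℝ I₁ x)
    (hr : DifferentiableAt ℝ r x) (hr' : DifferentiableAt ℝ (deriv r) x)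
    (hr'' : DifferentiableAt ℝ (deriv (deriv r)) x) (hr0 : r x ≠ 0) :
    HasDerivAt (fun y => relInv₈ I₁ r y ^ 3 / r y ^ 8)
      (relInv₈ I₁ r x ^ 2 * relInv₁₂ I₁ r x / r x ^ 9) x := by
  refine (((hasDerivAt_relInv₈ hI₁ hr hr' hr'').pow 3).div (hr.hasDerivAt.pow 8)
    (pow_ne_zero 8 hr0)).congr_deriv ?_
  -- the content is the identity `3P'r - 8Pr' = Q`
  simp only [Pi.pow_apply, relInv₈, relInv₁₂]
  field_simp
  ring

theorem invariants_eq_of_eventuallyEq {I₀ s t : ℝ → ℝ} (hI₁ : DifferentiableAt ℝ I₁ x)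
    (hr : DifferentiableAt ℝ r x) (hr' : DifferentiableAt ℝ (deriv r) x)
    (hr'' : DifferentiableAt ℝ (deriv (deriv r)) x) (hr0 : r x ≠ 0)
    (hrI : r x = deriv I₁ x - 2 * I₀ x)
    (hs : s =ᶠ[𝓝 x] fun y => relInv₈ I₁ r y / r y ^ 3) (ht : t =ᶠ[𝓝 x] r) :
    I₁ x = (s x * (t x) ^ 3 - 6 * deriv (deriv t) x * t x + 7 * (deriv t x) ^ 2)
        / (9 * (t x) ^ 2) ∧
      I₀ x = ((deriv s x - 9) * (t x) ^ 4 + deriv t x * s x * (t x) ^ 3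
        - 6 * deriv (deriv (deriv t)) x * (t x) ^ 2
        + 20 * deriv (deriv t) x * deriv t x * t x - 14 * (deriv t x) ^ 3)
        / (18 * (t x) ^ 3) := by
  have hs' := hs.deriv_eq.trans ((hasDerivAt_relInv₈ hI₁ hr hr' hr'').div
    (hr.hasDerivAt.pow 3) (pow_ne_zero 3 hr0)).deriv
  have hI₀ : I₀ x = (deriv I₁ x - r x) / 2 := by linarith
  rw [hs.eq_of_nhds, ht.eq_of_nhds, ht.deriv_eq, ht.deriv.deriv_eq, ht.deriv.deriv.deriv_eq, hs',
    hI₀]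
  simp only [Pi.pow_apply, relInv₈]
  constructor <;>
  · field_simp
    ring

end Pointwise

theorem stmt_9_general (a b : ℝ) (J : Set ℝ) (hJ : J = Set.Ioo a b)
    (I₁ I₀ : ℝ → ℝ) (hI₁ : ContDiffOn ℝ (⊤ : ℕ∞) I₁ J) (hI₀ : ContDiffOn ℝ (⊤ : ℕ∞) I₀ J)
    (r : ℝ → ℝ) (hr : ∀ x ∈ J, r x = deriv I₁ x - 2 * I₀ x)
    (hr0 : ∀ x ∈ J, r x ≠ 0)
    (L₁ L₂ : ℝ → ℝ)
    (hL₁ : ∀ x ∈ J, L₁ x = (6 * r x * deriv (deriv r) x + 9 * I₁ x * (r x) ^ 2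
        - 7 * (deriv r x) ^ 2) ^ 3 / (r x) ^ 8)
    (hL₂ : ∀ x ∈ J, L₂ x = (27 * deriv I₁ x * (r x) ^ 3 - 18 * I₁ x * (r x) ^ 2 * deriv r x
        + 56 * (deriv r x) ^ 3 - 72 * deriv (deriv r) x * deriv r x * r x
        + 18 * deriv (deriv (deriv r)) x * (r x) ^ 2) / (r x) ^ 4)
    (hL₁' : ∀ x ∈ J, deriv L₁ x ≠ 0)
    (s t : ℝ → ℝ)
    (hs : ∀ x ∈ J, s x = L₂ x * L₁ x / deriv L₁ x)
    (ht : ∀ x ∈ J, t x = L₁ x / (s x) ^ 3) :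
    ∀ x ∈ J,
      I₁ x = (s x * (t x) ^ 3 - 6 * deriv (deriv t) x * t x + 7 * (deriv t x) ^ 2)
          / (9 * (t x) ^ 2) ∧
      I₀ x = ((deriv s x - 9) * (t x) ^ 4 + deriv t x * s x * (t x) ^ 3
          - 6 * deriv (deriv (deriv t)) x * (t x) ^ 2
          + 20 * deriv (deriv t) x * deriv t x * t x - 14 * (deriv t x) ^ 3)
          / (18 * (t x) ^ 3) := by
  have hJo : IsOpen J := hJ ▸ isOpen_Ioo
  have hdiff {f : ℝ → ℝ} (hf : ContDiffOn ℝ (⊤ : ℕ∞) f J) {x : ℝ} (hx : x ∈ J) :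
      DifferentiableAt ℝ f x :=
    (hf.differentiableOn (by simp)).differentiableAt (hJo.mem_nhds hx)
  have hr₀ : ContDiffOn ℝ (⊤ : ℕ∞) r J :=
    ((hI₁.deriv_of_isOpen hJo (by simp)).sub (contDiffOn_const.mul hI₀)).congr hr
  have hr₁ : ContDiffOn ℝ (⊤ : ℕ∞) (deriv r) J := hr₀.deriv_of_isOpen hJo (by simp)
  have hr₂ : ContDiffOn ℝ (⊤ : ℕ∞) (deriv (deriv r)) J := hr₁.deriv_of_isOpen hJo (by simp)
  have hL₁P : EqOn L₁ (fun y => relInv₈ I₁ r y ^ 3 / r y ^ 8) J := hL₁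
  have hdL₁ : EqOn (deriv L₁) (fun y => relInv₈ I₁ r y ^ 2 * relInv₁₂ I₁ r y / r y ^ 9) J :=
    fun x hx => (hL₁P.deriv hJo hx).trans (hasDerivAt_relInv₈_pow_three_div (hdiff hI₁ hx)
      (hdiff hr₀ hx) (hdiff hr₁ hx) (hdiff hr₂ hx) (hr0 x hx)).deriv
  have hst (x : ℝ) (hx : x ∈ J) : s x = relInv₈ I₁ r x / r x ^ 3 ∧ t x = r x := by
    obtain ⟨hsx, htx⟩ := mul_div_eq_and_div_pow_eq (hr0 x hx) (hL₁ x hx) (hL₂ x hx) (hdL₁ hx)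
      (hL₁' x hx)
    rw [ht x hx, hs x hx, hsx, htx]
    exact ⟨rfl, rfl⟩
  intro x hx
  exact invariants_eq_of_eventuallyEq (hdiff hI₁ hx) (hdiff hr₀ hx) (hdiff hr₁ hx) (hdiff hr₂ hx)
    (hr0 x hx) (hr x hx) (eventuallyEq_of_mem (hJo.mem_nhds hx) fun y hy => (hst y hy).1)
    (eventuallyEq_of_mem (hJo.mem_nhds hx) fun y hy => (hst y hy).2)

/-- Recovery of the normal form invariants `I₁, I₀` from the intermediate
relative invariants `s = L₂L₁/L₁'` and `t = L₁/s³`: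
`I₁ = (st³ - 6t''t + 7t'²)/(9t²)` and
`I₀ = ((s'-9)t⁴ + t'st³ - 6t'''t² + 20t''t't - 14t'³)/(18t³)`. -/
theorem stmt_9 (a b : ℝ) (J : Set ℝ) (hJ : J = Set.Ioo a b)
    (I₁ I₀ : ℝ → ℝ) (hI₁ : ContDiffOn ℝ (⊤ : ℕ∞) I₁ J) (hI₀ : ContDiffOn ℝ (⊤ : ℕ∞) I₀ J)
    (r : ℝ → ℝ) (hr : ∀ x ∈ J, r x = deriv I₁ x - 2 * I₀ x)
    (hr0 : ∀ x ∈ J, r x ≠ 0)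
    (L₁ L₂ : ℝ → ℝ)
    (hL₁ : ∀ x ∈ J, L₁ x = (6 * r x * deriv (deriv r) x + 9 * I₁ x * (r x) ^ 2
        - 7 * (deriv r x) ^ 2) ^ 3 / (r x) ^ 8)
    (hL₂ : ∀ x ∈ J, L₂ x = (27 * deriv I₁ x * (r x) ^ 3 - 18 * I₁ x * (r x) ^ 2 * deriv r x
        + 56 * (deriv r x) ^ 3 - 72 * deriv (deriv r) x * deriv r x * r x
        + 18 * deriv (deriv (deriv r)) x * (r x) ^ 2) / (r x) ^ 4)
    (hL₁' : ∀ x ∈ J, deriv L₁ x ≠ 0)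
    (s t : ℝ → ℝ)
    (hs : ∀ x ∈ J, s x = L₂ x * L₁ x / deriv L₁ x)
    (ht : ∀ x ∈ J, t x = L₁ x / (s x) ^ 3)
    (hs0 : ∀ x ∈ J, s x ≠ 0) (ht0 : ∀ x ∈ J, t x ≠ 0) :
    ∀ x ∈ J,
      I₁ x = (s x * (t x) ^ 3 - 6 * deriv (deriv t) x * t x + 7 * (deriv t x) ^ 2)
          / (9 * (t x) ^ 2) ∧
      I₀ x = ((deriv s x - 9) * (t x) ^ 4 + deriv t x * s x * (t x) ^ 3
          - 6 * deriv (deriv (deriv t)) x * (t x) ^ 2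
          + 20 * deriv (deriv t) x * deriv t x * t x - 14 * (deriv t x) ^ 3)
          / (18 * (t x) ^ 3) :=
  stmt_9_general a b J hJ I₁ I₀ hI₁ hI₀ r hr hr0 L₁ L₂ hL₁ hL₂ hL₁' s t hs ht
end

section
/- Let K be a field and let p, q, N, D ∈ K[X] with q ≠ 0, D ≠ 0, p coprime to q, N coprime to D, and p/q a nonconstant element of the field of rational functions K(X). Suppose the rational function N/D decomposes through F = p/q, i.e., there exist polynomials Ñ, D̃ ∈ K[X] such that, in K(X), D̃(p/q) ≠ 0 and N/D = Ñ(p/q)/D̃(p/q). Then the bivariate polynomial p(X)q(Y) - p(Y)q(X) divides N(X)D(Y) - N(Y)D(X) in K[X, Y]. -/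
/-!
Clear denominators: for `m ≥ deg N', deg D'` the polynomials `P = q ^ m N'(p / q)` and
`Q = q ^ m D'(p / q)` satisfy `N Q = D P`, so coprimality gives `P = N r` and `Q = D r`.
Expanding `P` and `Q` as forms of degree `m` in `(p, q)` shows that `p(X)q(Y) - p(Y)q(X)`
divides `P(X)Q(Y) - P(Y)Q(X) = r(X) r(Y) (N(X)D(Y) - N(Y)D(X))`. As `p, q` are coprime and
`p / q` is nonconstant, `p(X)q(Y) - p(Y)q(X)` is primitive as a polynomial in either variable,
so Gauss's lemma cancels `r(X)` and `r(Y)`.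
-/

open Polynomial Polynomial.Bivariate Finset

lemma sub_dvd_pow_mul_pow_sub {S : Type*} [CommRing S] (u v u' v' : S) {i k j l : ℕ}
    (h : i + k = j + l) :
    u * v' - u' * v ∣ u ^ i * v ^ k * (u' ^ j * v' ^ l) - u' ^ i * v' ^ k * (u ^ j * v ^ l) := by
  wlog hij : i ≤ j generalizing i k j l
  · rw [← dvd_neg, neg_sub]
    convert this h.symm (by omega) using 1
    ring
  obtain ⟨t, rfl⟩ := Nat.exists_eq_add_of_le hij
  obtain rfl : k = l + t := by omega
  have ht : u * v' - u' * v ∣ (u' * v) ^ t - (u * v') ^ t :=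
    dvd_sub_comm.mp (sub_dvd_pow_sub_pow _ _ t)
  convert ht.mul_left ((u * u') ^ i * (v * v') ^ l) using 1
  ring

namespace Polynomial

section Homogenize

variable {R : Type*} [CommSemiring R]

lemma aeval_homogenize_eq_sum {S : Type*} [CommSemiring S] [Algebra R S] (A : R[X]) (m : ℕ)
    (u v : S) :
    MvPolynomial.aeval ![u, v] (A.homogenize m)
      = ∑ kl ∈ antidiagonal m, algebraMap R S (A.coeff kl.1) * u ^ kl.1 * v ^ kl.2 := by
  simp [homogenize, MvPolynomial.aeval_monomial, mul_assoc]

lemma map_aeval_homogenize {S S' : Type*} [CommSemiring S] [CommSemiring S'] [Algebra R S]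
    [Algebra R S'] (g : S →ₐ[R] S') (A : R[X]) (m : ℕ) (u v : S) :
    g (MvPolynomial.aeval ![u, v] (A.homogenize m))
      = MvPolynomial.aeval ![g u, g v] (A.homogenize m) := by
  simp only [aeval_homogenize_eq_sum, map_sum, map_mul, map_pow, AlgHom.commutes]

lemma aeval_homogenize_eq_pow_mul_aeval_div {L : Type*} [Field L] [Algebra R L] {A : R[X]}
    {m : ℕ} (hA : A.natDegree ≤ m) (u : L) {v : L} (hv : v ≠ 0) :
    MvPolynomial.aeval ![u, v] (A.homogenize m) = v ^ m * aeval (u / v) A := by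
  rw [aeval_homogenize_eq_sum, Nat.sum_antidiagonal_eq_sum_range_succ
    (fun i j => algebraMap R L (A.coeff i) * u ^ i * v ^ j),
    aeval_eq_sum_range' (Nat.lt_succ_of_le hA), mul_sum]
  refine sum_congr rfl fun i hi => ?_
  have hi : i ≤ m := Nat.lt_succ_iff.mp (mem_range.mp hi)
  rw [Algebra.smul_def, div_pow, ← Nat.add_sub_cancel' hi, pow_add, Nat.add_sub_cancel_left]
  field_simp

lemma sub_dvd_aeval_homogenize_mul_sub {S : Type*} [CommRing S] [Algebra R S] (A B : R[X])
    (m : ℕ) (u v u' v' : S) :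
    u * v' - u' * v ∣
      MvPolynomial.aeval ![u, v] (A.homogenize m) * MvPolynomial.aeval ![u', v'] (B.homogenize m)
        - MvPolynomial.aeval ![u', v'] (A.homogenize m)
          * MvPolynomial.aeval ![u, v] (B.homogenize m) := by
  simp only [aeval_homogenize_eq_sum, sum_mul_sum, ← sum_sub_distrib]
  refine dvd_sum fun ik hik => dvd_sum fun jl hjl => ?_
  rw [HasAntidiagonal.mem_antidiagonal] at hik hjl
  convert (sub_dvd_pow_mul_pow_sub u v u' v' (hik.trans hjl.symm)).mul_left
    (algebraMap R S (A.coeff ik.1) * algebraMap R S (B.coeff jl.1)) using 1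
  ring

end Homogenize

lemma IsPrimitive.dvd_of_dvd_C_mul {R : Type*} [CommRing R] [IsDomain R]
    [StrongNormalizedGCDMonoid R] {A g : R[X]} {c : R} (hA : A.IsPrimitive) (hc : c ≠ 0)
    (h : A ∣ C c * g) : A ∣ g := by
  rcases eq_or_ne g 0 with rfl | hg
  · exact dvd_zero A
  have hcg : C c * g ≠ 0 := mul_ne_zero (C_ne_zero.mpr hc) hg
  rw [← hA.dvd_primPart_iff_dvd hcg, primPart_mul hcg] at h
  obtain ⟨u, hu⟩ := isUnit_primPart_C c
  rwa [← hu, Units.dvd_mul_left, hA.dvd_primPart_iff_dvd hg] at h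

variable {K : Type*} [Field K]

lemma exists_coeff_mul_coeff_sub_ne_zero {p q : K[X]} (hq : q ≠ 0)
    (hpq : ∀ e : K, p ≠ C e * q) :
    ∃ j k, p.coeff j * q.coeff k - p.coeff k * q.coeff j ≠ 0 := by
  by_contra! h
  have hlead : q.leadingCoeff ≠ 0 := leadingCoeff_ne_zero.mpr hq
  refine hpq (p.coeff q.natDegree / q.leadingCoeff) (ext fun j => ?_)
  rw [coeff_C_mul, div_mul_eq_mul_div, eq_div_iff hlead, leadingCoeff, ← sub_eq_zero]
  exact h j q.natDegree

lemma isPrimitive_C_mul_map_C_sub {p q : K[X]} (hpq : IsCoprime p q) (hq : q ≠ 0)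
    (hnc : ∀ e : K, p ≠ C e * q) :
    (C p * q.map C - p.map C * C q).IsPrimitive := by
  intro c hc
  -- `c` divides every `p q_j - p_j q`, hence `λ p` and `λ q` for a nonzero minor `λ`
  have hcoeff : ∀ j, c ∣ p * C (q.coeff j) - C (p.coeff j) * q := fun j => by
    simpa [coeff_sub, coeff_C_mul, coeff_mul_C] using (C_dvd_iff_dvd_coeff _ _).mp hc j
  obtain ⟨j, k, hjk⟩ := exists_coeff_mul_coeff_sub_ne_zero hq hnc
  have hunit : IsUnit (C (p.coeff j * q.coeff k - p.coeff k * q.coeff j)) :=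
    isUnit_C.mpr hjk.isUnit
  have hp : c ∣ C (p.coeff j * q.coeff k - p.coeff k * q.coeff j) * p := by
    convert ((hcoeff k).mul_left (C (p.coeff j))).sub ((hcoeff j).mul_left (C (p.coeff k)))
      using 1
    simp only [map_sub, map_mul]; ring
  have hq' : c ∣ C (p.coeff j * q.coeff k - p.coeff k * q.coeff j) * q := by
    convert ((hcoeff k).mul_left (C (q.coeff j))).sub ((hcoeff j).mul_left (C (q.coeff k)))
      using 1
    simp only [map_sub, map_mul]; ring
  exact hpq.isUnit_of_dvd' (hunit.dvd_mul_left.mp hp) (hunit.dvd_mul_left.mp hq')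

end Polynomial

noncomputable def crossDiff {R : Type*} [CommRing R] (A B : R[X]) : MvPolynomial (Fin 2) R :=
  aeval (MvPolynomial.X 0) A * aeval (MvPolynomial.X 1) B
    - aeval (MvPolynomial.X 1) A * aeval (MvPolynomial.X 0) B

section CommRing

variable {R : Type*} [CommRing R]

lemma equivMvPolynomial_symm_aeval_X_zero (A : R[X]) :
    (equivMvPolynomial R).symm (aeval (MvPolynomial.X 0) A) = C A := by
  rw [← aeval_algHom_apply, equivMvPolynomial_symm_X_0, ← algebraMap_eq (R := R[X]),
    aeval_algebraMap_apply, aeval_X_left_apply]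

lemma equivMvPolynomial_symm_aeval_X_one (A : R[X]) :
    (equivMvPolynomial R).symm (aeval (MvPolynomial.X 1) A) = A.map C := by
  rw [← aeval_algHom_apply, equivMvPolynomial_symm_X_1, ← aeval_map_algebraMap R[X],
    aeval_X_left_apply, algebraMap_eq]

lemma rename_aeval_X {σ τ : Type*} (f : σ → τ) (i : σ) (A : R[X]) :
    MvPolynomial.rename (R := R) f (aeval (MvPolynomial.X i) A)
      = aeval (MvPolynomial.X (f i)) A := by
  rw [← aeval_algHom_apply, MvPolynomial.rename_X]

lemma rename_swap_crossDiff (A B : R[X]) :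
    MvPolynomial.rename (Equiv.swap 0 1) (crossDiff A B) = -crossDiff A B := by
  simp only [crossDiff, map_sub, map_mul, rename_aeval_X, Equiv.swap_apply_left,
    Equiv.swap_apply_right]
  ring

lemma crossDiff_mul_mul (A B r : R[X]) :
    crossDiff (A * r) (B * r)
      = aeval (MvPolynomial.X 0) r * (aeval (MvPolynomial.X 1) r * crossDiff A B) := by
  simp only [crossDiff, map_mul]
  ring

lemma crossDiff_dvd_crossDiff_aeval_homogenize (p q A B : R[X]) (m : ℕ) :
    crossDiff p q ∣ crossDiff (MvPolynomial.aeval ![p, q] (A.homogenize m))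
      (MvPolynomial.aeval ![p, q] (B.homogenize m)) := by
  simp only [crossDiff, map_aeval_homogenize]
  exact sub_dvd_aeval_homogenize_mul_sub A B m _ _ _ _

end CommRing

section Field

variable {K : Type*} [Field K] {p q : K[X]}

lemma crossDiff_dvd_of_dvd_aeval_X_zero_mul (hpq : IsCoprime p q) (hq : q ≠ 0)
    (hnc : ∀ e : K, p ≠ C e * q) {r : K[X]} (hr : r ≠ 0) {g : MvPolynomial (Fin 2) K}
    (h : crossDiff p q ∣ aeval (MvPolynomial.X 0) r * g) : crossDiff p q ∣ g := by
  classical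
  rw [← map_dvd_iff (equivMvPolynomial K).symm] at h ⊢
  have hcross : (equivMvPolynomial K).symm (crossDiff p q) = C p * q.map C - p.map C * C q := by
    rw [crossDiff, map_sub, map_mul, map_mul, equivMvPolynomial_symm_aeval_X_zero,
      equivMvPolynomial_symm_aeval_X_zero, equivMvPolynomial_symm_aeval_X_one,
      equivMvPolynomial_symm_aeval_X_one]
  rw [map_mul, equivMvPolynomial_symm_aeval_X_zero, hcross] at h
  rw [hcross]
  exact (isPrimitive_C_mul_map_C_sub hpq hq hnc).dvd_of_dvd_C_mul hr h

lemma crossDiff_dvd_of_dvd_aeval_X_one_mul (hpq : IsCoprime p q) (hq : q ≠ 0)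
    (hnc : ∀ e : K, p ≠ C e * q) {r : K[X]} (hr : r ≠ 0) {g : MvPolynomial (Fin 2) K}
    (h : crossDiff p q ∣ aeval (MvPolynomial.X 1) r * g) : crossDiff p q ∣ g := by
  rw [← map_dvd_iff (MvPolynomial.renameEquiv K (Equiv.swap (0 : Fin 2) 1))] at h ⊢
  simp only [MvPolynomial.renameEquiv_apply, map_mul, rename_swap_crossDiff, rename_aeval_X,
    Equiv.swap_apply_right, neg_dvd] at h ⊢
  exact crossDiff_dvd_of_dvd_aeval_X_zero_mul hpq hq hnc hr h

end Field

/-- If the rational function `N/D` (in lowest terms) decomposes through the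
nonconstant rational function `F = p/q` (in lowest terms), then
`p(X)q(Y) - p(Y)q(X)` divides `N(X)D(Y) - N(Y)D(X)` in `K[X, Y]`. -/
theorem stmt_10 {K : Type*} [Field K] (p q N D : Polynomial K)
    (hq : q ≠ 0) (hD : D ≠ 0) (hpq : IsCoprime p q) (hND : IsCoprime N D)
    (F : RatFunc K)
    (hF : F = algebraMap (Polynomial K) (RatFunc K) p
        / algebraMap (Polynomial K) (RatFunc K) q)
    (hFnc : ∀ e : K, F ≠ algebraMap K (RatFunc K) e)
    (hdec : ∃ N' D' : Polynomial K, Polynomial.aeval F D' ≠ 0 ∧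
      algebraMap (Polynomial K) (RatFunc K) N / algebraMap (Polynomial K) (RatFunc K) D
        = Polynomial.aeval F N' / Polynomial.aeval F D') :
    (Polynomial.aeval (MvPolynomial.X 0 : MvPolynomial (Fin 2) K) p
        * Polynomial.aeval (MvPolynomial.X 1 : MvPolynomial (Fin 2) K) q
      - Polynomial.aeval (MvPolynomial.X 1 : MvPolynomial (Fin 2) K) p
        * Polynomial.aeval (MvPolynomial.X 0 : MvPolynomial (Fin 2) K) q) ∣
    (Polynomial.aeval (MvPolynomial.X 0 : MvPolynomial (Fin 2) K) N
        * Polynomial.aeval (MvPolynomial.X 1 : MvPolynomial (Fin 2) K) D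
      - Polynomial.aeval (MvPolynomial.X 1 : MvPolynomial (Fin 2) K) N
        * Polynomial.aeval (MvPolynomial.X 0 : MvPolynomial (Fin 2) K) D) := by
  obtain ⟨N', D', hD', hdec⟩ := hdec
  let φ := IsScalarTower.toAlgHom K K[X] (RatFunc K)
  have hφ : Function.Injective φ := IsFractionRing.injective K[X] (RatFunc K)
  have hφq : φ q ≠ 0 := RatFunc.algebraMap_ne_zero hq
  replace hF : F = φ p / φ q := hF
  have hnc : ∀ e : K, p ≠ C e * q := by
    rintro e rfl
    refine hFnc e ?_
    rw [hF, map_mul, mul_div_assoc, div_self hφq, mul_one]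
    exact φ.commutes e
  let m := max N'.natDegree D'.natDegree
  set P := MvPolynomial.aeval ![p, q] (N'.homogenize m)
  set Q := MvPolynomial.aeval ![p, q] (D'.homogenize m)
  have key : crossDiff p q ∣ crossDiff P Q := crossDiff_dvd_crossDiff_aeval_homogenize p q N' D' m
  have hφP : φ P = φ q ^ m * aeval F N' := by
    rw [map_aeval_homogenize, hF, aeval_homogenize_eq_pow_mul_aeval_div (le_max_left _ _) _ hφq]
  have hφQ : φ Q = φ q ^ m * aeval F D' := by
    rw [map_aeval_homogenize, hF, aeval_homogenize_eq_pow_mul_aeval_div (le_max_right _ _) _ hφq]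
  have hNQ : N * Q = D * P := by
    have hcross : φ N * aeval F D' = aeval F N' * φ D :=
      (div_eq_div_iff (RatFunc.algebraMap_ne_zero hD) hD').mp hdec
    apply hφ
    rw [map_mul, map_mul, hφP, hφQ]
    linear_combination φ q ^ m * hcross
  obtain ⟨r, hQ⟩ : D ∣ Q := hND.symm.dvd_of_dvd_mul_left ⟨P, hNQ⟩
  have hr : r ≠ 0 := by
    rintro rfl
    exact mul_ne_zero (pow_ne_zero m hφq) hD' (by rw [← hφQ, hQ, mul_zero, map_zero])
  have hP : P = N * r := mul_left_cancel₀ hD (by rw [← hNQ, hQ]; ring)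
  rw [hP, hQ, crossDiff_mul_mul] at key
  exact crossDiff_dvd_of_dvd_aeval_X_one_mul hpq hq hnc hr
    (crossDiff_dvd_of_dvd_aeval_X_zero_mul hpq hq hnc hr key)
end

section
/- Let A, B ∈ ℂ[X, Y] be nonzero polynomials and let P be a greatest common divisor of A and B in the polynomial ring ℂ[X, Y]. For t₀ ∈ ℂ let A(X, t₀), B(X, t₀), P(X, t₀) ∈ ℂ[X] denote the univariate polynomials obtained by substituting Y = t₀. Then the set of t₀ ∈ ℂ for which the univariate greatest common divisor of A(X, t₀) and B(X, t₀) is not associated (equal up to a nonzero constant factor) to P(X, t₀) is finite. -/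
/-!
Write `A = P a` and `B = P b` in `ℂ[Y][X]`. Since `P` is a gcd, `a` and `b` are relatively prime,
so by Gauss's lemma they are coprime in `ℂ(Y)[X]`; the resultant then clears denominators in a
Bézout identity `a u + b v = d` with `0 ≠ d ∈ ℂ[Y]`. At every `t₀` with `d(t₀) ≠ 0` the
specialisations of `a` and `b` are coprime, so `gcd(A(X, t₀), B(X, t₀))` is associated to
`P(X, t₀)`.
-/

open Polynomial
open scoped nonZeroDivisors

theorem isRelPrime_of_forall_dvd_mul_left {α : Type*} [CommMonoidWithZero α] [IsCancelMulZero α]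
    {p a b : α} (hp : p ≠ 0) (h : ∀ q, q ∣ p * a → q ∣ p * b → q ∣ p) : IsRelPrime a b := by
  intro q hqa hqb
  have : p * q ∣ p * 1 := by
    simpa using h (p * q) (mul_dvd_mul_left p hqa) (mul_dvd_mul_left p hqb)
  exact isUnit_of_dvd_one ((mul_dvd_mul_iff_left hp).1 this)

theorem associated_gcd_mul_mul_of_isRelPrime {α : Type*} [CommMonoidWithZero α]
    [GCDMonoid α] (a : α) {b c : α} (h : IsRelPrime b c) :
    Associated (gcd (a * b) (a * c)) a :=
  (gcd_mul_left' a b c).trans (associated_mul_unit_left _ _ (gcd_isUnit_iff_isRelPrime.2 h))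

namespace Polynomial

section FractionRing

variable {R K : Type*} [CommRing R] [IsDomain R] [NormalizedGCDMonoid R]
  [Field K] [Algebra R K] [IsFractionRing R K]

theorem exists_isPrimitive_map_associated {g : K[X]} (hg : g ≠ 0) :
    ∃ p : R[X], p.IsPrimitive ∧ Associated (p.map (algebraMap R K)) g := by
  set n := IsLocalization.integerNormalization R⁰ g
  obtain ⟨b, hb, hbn⟩ := IsLocalization.integerNormalization_spec R⁰ g
  have hinj := IsFractionRing.injective R K
  have hn : n ≠ 0 := IsFractionRing.integerNormalization_eq_zero_iff.not.2 hg
  have hcontent : IsUnit (C (algebraMap R K n.content)) :=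
    isUnit_C.2 <| isUnit_iff_ne_zero.2 <|
      (map_ne_zero_iff _ hinj).2 (content_eq_zero_iff.not.2 hn)
  have hb : IsUnit (C (algebraMap R K b)) :=
    isUnit_C.2 <| isUnit_iff_ne_zero.2 <|
      (map_ne_zero_iff _ hinj).2 (nonZeroDivisors.ne_zero hb)
  refine ⟨n.primPart, n.isPrimitive_primPart, ?_⟩
  have key : C (algebraMap R K n.content) * n.primPart.map (algebraMap R K) =
      C (algebraMap R K b) * g := by
    rw [← map_C, ← Polynomial.map_mul, ← n.eq_C_content_mul_primPart, hbn,
      ← smul_eq_C_mul, algebraMap_smul]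
  exact (associated_unit_mul_left _ _ hcontent).symm.trans <|
    key ▸ associated_unit_mul_left _ _ hb

theorem isCoprime_map_of_isRelPrime {a b : R[X]} (ha : a ≠ 0) (h : IsRelPrime a b) :
    IsCoprime (a.map (algebraMap R K)) (b.map (algebraMap R K)) := by
  refine IsRelPrime.isCoprime fun g hga hgb => ?_
  have hg : g ≠ 0 := by
    rintro rfl
    exact ha (map_injective _ (IsFractionRing.injective R K) (by simpa using hga))
  obtain ⟨p, hp, hpg⟩ := exists_isPrimitive_map_associated (R := R) hg
  have hpa : p ∣ a := hp.dvd_of_fraction_map_dvd_fraction_map (hpg.dvd.trans hga)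
  have hpb : p ∣ b := hp.dvd_of_fraction_map_dvd_fraction_map (hpg.dvd.trans hgb)
  exact hpg.isUnit ((h hpa hpb).map (mapRingHom (algebraMap R K)))

end FractionRing

theorem exists_mul_add_mul_eq_C_of_isCoprime_map {R K : Type*} [CommRing R] [Field K]
    {φ : R →+* K} (hφ : Function.Injective φ) {f g : R[X]} (hf : f ≠ 0)
    (h : IsCoprime (f.map φ) (g.map φ)) : ∃ u v : R[X], ∃ d : R, d ≠ 0 ∧ f * u + g * v = C d := by
  by_cases hf0 : f.natDegree = 0
  · have hfC := eq_C_of_natDegree_eq_zero hf0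
    refine ⟨1, 0, f.coeff 0, fun h0 => hf (by rw [hfC, h0, C_0]), ?_⟩
    rw [mul_one, mul_zero, add_zero, ← hfC]
  obtain ⟨u, v, -, -, huv⟩ := exists_mul_add_mul_eq_C_resultant f g le_rfl le_rfl (Or.inl hf0)
  have hres := resultant_ne_zero _ _ h
  rw [natDegree_map_eq_of_injective hφ, natDegree_map_eq_of_injective hφ, resultant_map_map] at hres
  exact ⟨u, v, _, fun h0 => hres (by rw [h0, map_zero]), huv⟩

theorem isCoprime_map_of_mul_add_mul_eq_C {R S : Type*} [CommRing R] [CommRing S] (φ : R →+* S)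
    {f g u v : R[X]} {d : R} (h : f * u + g * v = C d) (hd : IsUnit (φ d)) :
    IsCoprime (f.map φ) (g.map φ) := by
  have hmap : f.map φ * u.map φ + g.map φ * v.map φ = C (φ d) := by
    simpa only [Polynomial.map_add, Polynomial.map_mul, map_C] using congrArg (map φ) h
  have hinv : C (↑hd.unit⁻¹ : S) * C (φ d) = 1 := by
    rw [← C_mul, IsUnit.val_inv_mul, C_1]
  exact ⟨C (↑hd.unit⁻¹ : S) * u.map φ, C (↑hd.unit⁻¹ : S) * v.map φ, by
    linear_combination C (↑hd.unit⁻¹ : S) * hmap + hinv⟩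

theorem exists_ne_zero_forall_associated_gcd_map {R : Type*} [CommRing R] [IsDomain R]
    [NormalizedGCDMonoid R] (S : Type*) [CommRing S] [GCDMonoid S[X]] {a b p : R[X]} (ha : a ≠ 0)
    (hpa : p ∣ a) (hpb : p ∣ b) (hp : ∀ q, q ∣ a → q ∣ b → q ∣ p) :
    ∃ d : R, d ≠ 0 ∧ ∀ φ : R →+* S, IsUnit (φ d) →
      Associated (gcd (a.map φ) (b.map φ)) (p.map φ) := by
  obtain ⟨a₁, rfl⟩ := hpa
  obtain ⟨b₁, rfl⟩ := hpb
  have hrel : IsRelPrime a₁ b₁ := isRelPrime_of_forall_dvd_mul_left (left_ne_zero_of_mul ha) hp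
  obtain ⟨u, v, d, hd, huv⟩ := exists_mul_add_mul_eq_C_of_isCoprime_map
    (IsFractionRing.injective R (FractionRing R)) (right_ne_zero_of_mul ha)
    (isCoprime_map_of_isRelPrime (right_ne_zero_of_mul ha) hrel)
  refine ⟨d, hd, fun φ hφd => ?_⟩
  rw [Polynomial.map_mul, Polynomial.map_mul]
  exact associated_gcd_mul_mul_of_isRelPrime _
    (isCoprime_map_of_mul_add_mul_eq_C φ huv hφd).isRelPrime

end Polynomial

namespace MvPolynomial

variable (R : Type*) [CommRing R]

/-- `X 0` becomes the outer variable and `X 1` the inner one (`C X`). -/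
noncomputable def bivariateEquiv : MvPolynomial (Fin 2) R ≃ₐ[R] R[X][X] :=
  (finSuccEquiv R 1).trans (Polynomial.mapAlgEquiv (uniqueAlgEquiv R (Fin 1)))

variable {R}

theorem aeval_X_C_eq_map_bivariateEquiv (t : R) (q : MvPolynomial (Fin 2) R) :
    aeval (fun i : Fin 2 => if i = 0 then Polynomial.X else Polynomial.C t) q =
      (bivariateEquiv R q).map (Polynomial.evalRingHom t) := by
  suffices aeval (fun i : Fin 2 => if i = 0 then Polynomial.X else Polynomial.C t) =
      (Polynomial.mapAlgHom (Polynomial.aeval t)).comp (bivariateEquiv R).toAlgHom from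
    DFunLike.congr_fun this q
  refine algHom_ext fun i => Fin.cases ?_ (fun j => ?_) i
  · simp [bivariateEquiv, finSuccEquiv_X_zero]
  · simp [bivariateEquiv, finSuccEquiv_X_succ, Fin.succ_ne_zero]

end MvPolynomial

theorem stmt_12_general (A B P : MvPolynomial (Fin 2) ℂ) (hA : A ≠ 0)
    (hPA : P ∣ A) (hPB : P ∣ B)
    (hPgcd : ∀ Q : MvPolynomial (Fin 2) ℂ, Q ∣ A → Q ∣ B → Q ∣ P) :
    {t₀ : ℂ | ¬ Associated
        (gcd (MvPolynomial.aeval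
                (fun i : Fin 2 => if i = 0 then Polynomial.X else Polynomial.C t₀) A)
             (MvPolynomial.aeval
                (fun i : Fin 2 => if i = 0 then Polynomial.X else Polynomial.C t₀) B))
        (MvPolynomial.aeval
          (fun i : Fin 2 => if i = 0 then Polynomial.X else Polynomial.C t₀) P)}.Finite := by
  set e := MvPolynomial.bivariateEquiv ℂ
  have he_gcd : ∀ q, q ∣ e A → q ∣ e B → q ∣ e P := fun q hqA hqB => by
    rw [← e.apply_symm_apply q, map_dvd_iff] at hqA hqB ⊢
    exact hPgcd _ hqA hqB
  obtain ⟨d, hd, hgcd⟩ := exists_ne_zero_forall_associated_gcd_map ℂ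
    ((map_ne_zero_iff e e.injective).2 hA) ((map_dvd_iff e).2 hPA) ((map_dvd_iff e).2 hPB) he_gcd
  refine (finite_setOfPred_isRoot hd).subset fun t ht => ?_
  by_contra hroot
  simp only [Set.mem_ofPred_eq, MvPolynomial.aeval_X_C_eq_map_bivariateEquiv] at ht
  exact ht (hgcd (evalRingHom t) (isUnit_iff_ne_zero.2 hroot))

/-- If `P` is a gcd of nonzero `A, B ∈ ℂ[X, Y]`, then for all but finitely many
`t₀ ∈ ℂ` the univariate gcd of the specializations `A(X, t₀)` and `B(X, t₀)`
is associated to the specialization `P(X, t₀)`. -/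
theorem stmt_12 (A B P : MvPolynomial (Fin 2) ℂ) (hA : A ≠ 0) (hB : B ≠ 0)
    (hPA : P ∣ A) (hPB : P ∣ B)
    (hPgcd : ∀ Q : MvPolynomial (Fin 2) ℂ, Q ∣ A → Q ∣ B → Q ∣ P) :
    {t₀ : ℂ | ¬ Associated
        (gcd (MvPolynomial.aeval
                (fun i : Fin 2 => if i = 0 then Polynomial.X else Polynomial.C t₀) A)
             (MvPolynomial.aeval
                (fun i : Fin 2 => if i = 0 then Polynomial.X else Polynomial.C t₀) B))
        (MvPolynomial.aeval
          (fun i : Fin 2 => if i = 0 then Polynomial.X else Polynomial.C t₀) P)}.Finite :=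
  stmt_12_general A B P hA hPA hPB hPgcd
end
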